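/- Let Φ be a Young function satisfying the Δ2-condition. If (ξ_n) is a sequence in L_{Φ*} with sup_n ‖ξ_n‖_{Φ*} < ∞ that converges in probability to some ξ ∈ L_{Φ*}, then there exists a subsequence (ξ_{n_k}) such that for every further subsequence (ξ_{n_{k(i)}}), the Cesàro means converge in order to ξ: sup_N |(1/N) Σ_{i≤N} ξ_{n_{k(i)}}| ∈ L_{Φ*} and (1/N) Σ_{i≤N} ξ_{n_{k(i)}} → ξ a.s. as N → ∞. -/

import Mathlib

open MeasureTheory Filter Topology Set
open scoped ENNReal

noncomputable section

namespace OrliczPaper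

variable {Ω : Type*} [MeasurableSpace Ω]

/-- A (finite, coercive) Young function: an even convex function with `Φ 0 = 0`
and `Φ x / x → ∞` as `x → ∞`. -/
structure IsYoung (Φ : ℝ → ℝ) : Prop where
  even : ∀ x, Φ (-x) = Φ x
  convexOn : ConvexOn ℝ Set.univ Φ
  map_zero : Φ 0 = 0
  coercive : Tendsto (fun x => Φ x / x) atTop atTop

/-- The Δ₂-condition: `limsup_{x→∞} Φ(2x)/Φ(x) < ∞`, i.e. `Φ(2x) ≤ C Φ(x)`
for all large `x`. -/
def Delta2 (Φ : ℝ → ℝ) : Prop :=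
  ∃ C x₀ : ℝ, ∀ x ≥ x₀, Φ (2 * x) ≤ C * Φ x

/-- The conjugate Young function `Φ*(y) = sup_x (x y − Φ x)`. -/
def conj (Φ : ℝ → ℝ) (y : ℝ) : ℝ := ⨆ x : ℝ, x * y - Φ x

variable (P : Measure Ω)

/-- Membership in the Orlicz space `L_Φ`: a measurable function with
`E[Φ(l ξ)] < ∞` for some `l > 0`. -/
def MemOrlicz (Φ : ℝ → ℝ) (f : Ω → ℝ) : Prop :=
  Measurable f ∧ ∃ l : ℝ, 0 < l ∧ ∫⁻ ω, ENNReal.ofReal (Φ (l * f ω)) ∂P < ⊤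

/-- The Orlicz space `L_Φ`, as a set of (everywhere defined) measurable functions. -/
def Orlicz (Φ : ℝ → ℝ) : Set (Ω → ℝ) := {f | MemOrlicz P Φ f}

/-- The Luxemburg norm `‖f‖_Φ = inf {l > 0 : E[Φ(f/l)] ≤ 1}`. -/
def luxNorm (Φ : ℝ → ℝ) (f : Ω → ℝ) : ℝ :=
  sInf {l : ℝ | 0 < l ∧ ∫⁻ ω, ENNReal.ofReal (Φ (f ω / l)) ∂P ≤ 1}

/-- The Orlicz (dual) norm `‖f‖_{(Φ*)} = sup {E[g f] : E[Φ(g)] ≤ 1}`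
(the Young function `Φ` here is the one of the *predual*). -/
def orliczNorm (Φ : ℝ → ℝ) (f : Ω → ℝ) : ℝ :=
  sSup {r : ℝ | ∃ g : Ω → ℝ, Measurable g ∧
    (∫⁻ ω, ENNReal.ofReal (Φ (g ω)) ∂P) ≤ 1 ∧ r = ∫ ω, g ω * f ω ∂P}

/-- The bilinear pairing `⟨f, g⟩ = E[f g]`. -/
def pairing (f g : Ω → ℝ) : ℝ := ∫ ω, f ω * g ω ∂P

/-- The weak topology `σ(E, F)` on `E` induced by the pairing with `F`. -/
def weakT (E F : Set (Ω → ℝ)) : TopologicalSpace E :=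
  TopologicalSpace.induced
    (fun ξ : E => fun η : F => pairing P (ξ : Ω → ℝ) (η : Ω → ℝ)) inferInstance

/-- The absolutely convex (convex and balanced) `σ(F,E)`-compact subsets of `F`. -/
def dualSets (E F : Set (Ω → ℝ)) : Set (Set F) :=
  {A | Convex ℝ (Subtype.val '' A) ∧ Balanced ℝ (Subtype.val '' A) ∧
    @IsCompact _ (weakT P F E) A}

/-- The Mackey topology `τ(E, F)`: the topology on `E` of uniform convergence on
absolutely convex `σ(F,E)`-compact subsets of `F`. -/
def mackeyT (E F : Set (Ω → ℝ)) : TopologicalSpace E :=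
  TopologicalSpace.induced
    (fun ξ : E => UniformOnFun.ofFun (dualSets P E F)
      (fun η : F => pairing P (ξ : Ω → ℝ) (η : Ω → ℝ)))
    inferInstance

/-- A distance generating the topology of convergence in `P`-probability. -/
def probDist (f g : Ω → ℝ) : ℝ := ∫ ω, min |f ω - g ω| 1 ∂P

/-- The topology of convergence in probability, restricted to `E ⊆ L₀`. -/
def probT (E : Set (Ω → ℝ)) : TopologicalSpace E :=
  TopologicalSpace.generateFrom
    {U | ∃ f : E, ∃ ε : ℝ, 0 < ε ∧ U = {g : E | probDist P (f : Ω → ℝ) (g : Ω → ℝ) < ε}}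

/-- `L_∞`: essentially bounded measurable functions. -/
def Linf : Set (Ω → ℝ) := {f | Measurable f ∧ ∃ C : ℝ, ∀ᵐ ω ∂P, |f ω| ≤ C}

/-- `L_1`: integrable measurable functions. -/
def L1 : Set (Ω → ℝ) := {f | Measurable f ∧ Integrable f P}

/-- The essential supremum norm. -/
def linfNorm (f : Ω → ℝ) : ℝ := sInf {C : ℝ | 0 ≤ C ∧ ∀ᵐ ω ∂P, |f ω| ≤ C}

/-- Uniform integrability of a set of functions:
`sup_{f ∈ A} E[|f| 1_{|f| > N}] → 0`. -/
def UnifInt (A : Set (Ω → ℝ)) : Prop :=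
  Tendsto (fun N : ℕ => ⨆ f ∈ A, ∫⁻ ω in {ω | (N : ℝ) < |f ω|}, ENNReal.ofReal |f ω| ∂P)
    atTop (𝓝 0)

/-- Uniform integrability of a sequence of functions. -/
def UnifIntSeq (g : ℕ → Ω → ℝ) : Prop :=
  Tendsto (fun N : ℕ => ⨆ n, ∫⁻ ω in {ω | (N : ℝ) < |g n ω|}, ENNReal.ofReal |g n ω| ∂P)
    atTop (𝓝 0)

/-- The Cesàro means of a sequence of functions: `cesaro ξ N` is the average of
`ξ 0, …, ξ N`. -/
def cesaro (ξ : ℕ → Ω → ℝ) (N : ℕ) : Ω → ℝ :=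
  fun ω => (∑ i ∈ Finset.range (N + 1), ξ i ω) / (N + 1)

/-- `sup_n |ξ n| ∈ L_Φ` (order boundedness of the sequence `ξ` in `L_Φ`). -/
def supMem (Φ : ℝ → ℝ) (ξ : ℕ → Ω → ℝ) : Prop :=
  (∀ᵐ ω ∂P, BddAbove (Set.range fun n => |ξ n ω|)) ∧
    MemOrlicz P Φ (fun ω => ⨆ n, |ξ n ω|)

/-- `ξb` is a sequence of forward convex combinations of `ξ`:
`ξb n ∈ conv (ξ k ; k ≥ n)`. -/
def FwdConvComb (ξ ξb : ℕ → Ω → ℝ) : Prop :=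
  ∀ n, ξb n ∈ convexHull ℝ {g : Ω → ℝ | ∃ k ≥ n, g = ξ k}

/-- The left derivative of a convex function. -/
def leftDeriv (Φ : ℝ → ℝ) (y : ℝ) : ℝ :=
  ⨆ h : {h : ℝ // 0 < h}, (Φ y - Φ (y - (h : ℝ))) / (h : ℝ)

/-- `p_Φ(x) = sup_{y > x} y Φ'(y) / Φ(y)`. -/
def pPhiAt (Φ : ℝ → ℝ) (x : ℝ) : ℝ≥0∞ :=
  ⨆ y : {y : ℝ // x < y}, ENNReal.ofReal ((y : ℝ) * leftDeriv Φ (y : ℝ) / Φ (y : ℝ))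

/-- `p_Φ = inf_{x ≥ 0} p_Φ(x)`. -/
def pPhi (Φ : ℝ → ℝ) : ℝ≥0∞ := ⨅ x : {x : ℝ // 0 ≤ x}, pPhiAt Φ x

/-- `q_Φ = p_Φ / (p_Φ − 1)` (with `1/0 = ∞`). -/
def qPhi (Φ : ℝ → ℝ) : ℝ≥0∞ := pPhi Φ / (pPhi Φ - 1)

end OrliczPaper

namespace OrliczPaper

section AuxConj

variable {Φ : ℝ → ℝ}

lemma young_nonneg (hΦ : IsYoung Φ) (x : ℝ) : 0 ≤ Φ x := by
  have h := hΦ.convexOn.2 (Set.mem_univ x) (Set.mem_univ (-x))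
      (by norm_num : (0:ℝ) ≤ 1/2) (by norm_num : (0:ℝ) ≤ 1/2) (by norm_num)
  have hx : (1/2 : ℝ) • x + (1/2 : ℝ) • (-x) = 0 := by
    rw [smul_eq_mul, smul_eq_mul]; ring
  rw [hx, hΦ.map_zero, smul_eq_mul, smul_eq_mul, hΦ.even] at h
  linarith

lemma young_mono (hΦ : IsYoung Φ) {a b : ℝ} (ha : 0 ≤ a) (hab : a ≤ b) : Φ a ≤ Φ b := by
  rcases eq_or_lt_of_le (ha.trans hab) with hb | hb
  · have ha0 : a = 0 := le_antisymm (hab.trans hb.symm.le) ha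
    rw [ha0, ← hb]
  · have ht0 : 0 ≤ a / b := div_nonneg ha hb.le
    have ht1 : a / b ≤ 1 := (div_le_one hb).2 hab
    have h := hΦ.convexOn.2 (Set.mem_univ b) (Set.mem_univ 0) ht0
        (by linarith : (0:ℝ) ≤ 1 - a / b) (by ring)
    rw [smul_eq_mul, smul_eq_mul, smul_eq_mul, smul_eq_mul, div_mul_cancel₀ a (ne_of_gt hb),
      mul_zero, add_zero, hΦ.map_zero, mul_zero, add_zero] at h
    calc Φ a ≤ a / b * Φ b := h
    _ ≤ 1 * Φ b := mul_le_mul_of_nonneg_right ht1 (young_nonneg hΦ b)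
    _ = Φ b := one_mul _

lemma young_abs (hΦ : IsYoung Φ) (x : ℝ) : Φ |x| = Φ x := by
  rcases abs_cases x with ⟨h, _⟩ | ⟨h, _⟩
  · rw [h]
  · rw [h, hΦ.even]

lemma conj_bddAbove (hΦ : IsYoung Φ) (y : ℝ) :
    BddAbove (Set.range fun x => x * y - Φ x) := by
  obtain ⟨R, hR⟩ := eventually_atTop.mp (hΦ.coercive.eventually_ge_atTop (|y| + 1))
  set R' := max R 1 with hR'def
  have hR'1 : (1:ℝ) ≤ R' := le_max_right _ _
  have hR'0 : (0:ℝ) < R' := lt_of_lt_of_le one_pos hR'1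
  refine ⟨R' * |y|, ?_⟩
  rintro z ⟨x, rfl⟩
  by_cases hx : |x| ≤ R'
  · have h1 : x * y ≤ R' * |y| := by
      calc x * y ≤ |x * y| := le_abs_self _
      _ = |x| * |y| := abs_mul x y
      _ ≤ R' * |y| := mul_le_mul_of_nonneg_right hx (abs_nonneg y)
    have h2 := young_nonneg hΦ x
    simp only []
    linarith
  · push_neg at hx
    have hxR : R ≤ |x| := le_trans (le_max_left R 1) hx.le
    have hx0 : (0:ℝ) < |x| := lt_trans hR'0 hx
    have h1 : |y| + 1 ≤ Φ |x| / |x| := hR |x| hxR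
    have h2 : (|y| + 1) * |x| ≤ Φ |x| := by
      rw [← le_div_iff₀ hx0]; exact h1
    rw [young_abs hΦ] at h2
    have h3 : x * y ≤ |x| * |y| := by
      calc x * y ≤ |x * y| := le_abs_self _
      _ = |x| * |y| := abs_mul x y
    have h4 : (0:ℝ) ≤ R' * |y| := mul_nonneg hR'0.le (abs_nonneg y)
    simp only []
    nlinarith

lemma le_conj (hΦ : IsYoung Φ) (y x : ℝ) : x * y - Φ x ≤ conj Φ y :=
  le_ciSup (conj_bddAbove hΦ y) x

lemma conj_le {y B : ℝ} (h : ∀ x, x * y - Φ x ≤ B) : conj Φ y ≤ B :=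
  ciSup_le h

lemma conj_nonneg (hΦ : IsYoung Φ) (y : ℝ) : 0 ≤ conj Φ y := by
  have h := le_conj hΦ y 0
  simpa [hΦ.map_zero] using h

lemma conj_zero (hΦ : IsYoung Φ) : conj Φ 0 = 0 := by
  refine le_antisymm (conj_le fun x => ?_) (conj_nonneg hΦ 0)
  have h := young_nonneg hΦ x
  simp only [mul_zero]
  linarith

lemma conj_even (hΦ : IsYoung Φ) (y : ℝ) : conj Φ (-y) = conj Φ y := by
  have key : ∀ z : ℝ, conj Φ (-z) ≤ conj Φ z := by
    intro z
    apply conj_le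
    intro x
    have h := le_conj hΦ z (-x)
    rw [hΦ.even] at h
    have e : x * (-z) = -x * z := by ring
    linarith [e.le]
  refine le_antisymm (key y) ?_
  have h := key (-y)
  rwa [neg_neg] at h

lemma conj_comb_le (hΦ : IsYoung Φ) {t s : ℝ} (ht : 0 ≤ t) (hs : 0 ≤ s)
    (hts : t + s = 1) (a b : ℝ) :
    conj Φ (t * a + s * b) ≤ t * conj Φ a + s * conj Φ b := by
  apply conj_le
  intro x
  have h1 := mul_le_mul_of_nonneg_left (le_conj hΦ a x) ht
  have h2 := mul_le_mul_of_nonneg_left (le_conj hΦ b x) hs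
  have h3 : t * Φ x + s * Φ x = Φ x := by rw [← add_mul, hts, one_mul]
  nlinarith [h1, h2, h3]

lemma conj_smul_le (hΦ : IsYoung Φ) {t : ℝ} (ht0 : 0 ≤ t) (ht1 : t ≤ 1) (z : ℝ) :
    conj Φ (t * z) ≤ t * conj Φ z := by
  have h := conj_comb_le hΦ ht0 (by linarith : (0:ℝ) ≤ 1 - t) (by ring) z 0
  simpa [conj_zero hΦ] using h

lemma conj_mono (hΦ : IsYoung Φ) {a b : ℝ} (ha : 0 ≤ a) (hab : a ≤ b) :
    conj Φ a ≤ conj Φ b := by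
  rcases eq_or_lt_of_le (ha.trans hab) with hb | hb
  · have ha0 : a = 0 := le_antisymm (hab.trans hb.symm.le) ha
    rw [ha0, ← hb]
  · have h := conj_smul_le hΦ (div_nonneg ha hb.le) ((div_le_one hb).2 hab) b
    rw [div_mul_cancel₀ a (ne_of_gt hb)] at h
    exact h.trans (mul_le_of_le_one_left (conj_nonneg hΦ b) ((div_le_one hb).2 hab))

lemma conj_abs (hΦ : IsYoung Φ) (x : ℝ) : conj Φ |x| = conj Φ x := by
  rcases abs_cases x with ⟨h, _⟩ | ⟨h, _⟩
  · rw [h]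
  · rw [h, conj_even hΦ]

lemma conj_mono_abs (hΦ : IsYoung Φ) {u v : ℝ} (h : |u| ≤ |v|) :
    conj Φ u ≤ conj Φ v := by
  rw [← conj_abs hΦ u, ← conj_abs hΦ v]
  exact conj_mono hΦ (abs_nonneg u) h

lemma conj_meas (hΦ : IsYoung Φ) : Measurable (conj Φ) := by
  have h1 : Monotone fun t => conj Φ (max t 0) := fun s t hst =>
    conj_mono hΦ (le_max_right _ _) (max_le_max hst le_rfl)
  have h2 : conj Φ = (fun t => conj Φ (max t 0)) ∘ fun x : ℝ => |x| := by
    funext x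
    simp only [Function.comp_apply, max_eq_left (abs_nonneg x), conj_abs hΦ]
  rw [h2]
  exact h1.measurable.comp measurable_abs

lemma conj_sum_le (hΦ : IsYoung Φ) {ι : Type*} (s : Finset ι) (w y : ι → ℝ)
    (hw : ∀ i ∈ s, 0 ≤ w i) (hw1 : ∑ i ∈ s, w i ≤ 1) :
    conj Φ (∑ i ∈ s, w i * y i) ≤ ∑ i ∈ s, w i * conj Φ (y i) := by
  classical
  induction s using Finset.induction_on generalizing w with
  | empty => simp [conj_zero hΦ]
  | @insert a s ha ih =>
    rw [Finset.sum_insert ha] at hw1 ⊢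
    rw [Finset.sum_insert ha]
    have hwa : 0 ≤ w a := hw a (Finset.mem_insert_self a s)
    have hws : ∀ i ∈ s, 0 ≤ w i := fun i hi => hw i (Finset.mem_insert_of_mem hi)
    have hsum0 : 0 ≤ ∑ i ∈ s, w i := Finset.sum_nonneg hws
    by_cases hwa1 : 1 - w a = 0
    · have h0 : ∑ i ∈ s, w i = 0 := by linarith
      have hz : ∀ i ∈ s, w i = 0 := (Finset.sum_eq_zero_iff_of_nonneg hws).1 h0
      have e1 : ∑ i ∈ s, w i * y i = 0 :=
        Finset.sum_eq_zero fun i hi => by rw [hz i hi, zero_mul]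
      have e2 : ∑ i ∈ s, w i * conj Φ (y i) = 0 :=
        Finset.sum_eq_zero fun i hi => by rw [hz i hi, zero_mul]
      have hwa' : w a = 1 := by linarith
      rw [e1, e2, hwa', add_zero, add_zero, one_mul, one_mul]
    · have hcpos : 0 < 1 - w a := lt_of_le_of_ne (by linarith) (Ne.symm hwa1)
      set c := 1 - w a with hcdef
      have key := conj_comb_le hΦ hwa hcpos.le (by rw [hcdef]; ring) (y a)
        ((∑ i ∈ s, w i * y i) / c)
      rw [mul_div_cancel₀ _ (ne_of_gt hcpos)] at key
      have e3 : (∑ i ∈ s, w i * y i) / c = ∑ i ∈ s, w i / c * y i := by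
        rw [Finset.sum_div]
        exact Finset.sum_congr rfl fun i _ => by ring
      have hIH := ih (fun i => w i / c) (fun i hi => div_nonneg (hws i hi) hcpos.le)
        (by rw [← Finset.sum_div, div_le_one hcpos]; linarith)
      rw [e3] at key
      have e4 : c * ∑ i ∈ s, w i / c * conj Φ (y i) = ∑ i ∈ s, w i * conj Φ (y i) := by
        rw [Finset.mul_sum]
        exact Finset.sum_congr rfl fun i _ => by field_simp
      calc conj Φ (w a * y a + ∑ i ∈ s, w i * y i)
          ≤ w a * conj Φ (y a) + c * conj Φ (∑ i ∈ s, w i / c * y i) := key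
      _ ≤ w a * conj Φ (y a) + c * ∑ i ∈ s, w i / c * conj Φ (y i) := by
          have := mul_le_mul_of_nonneg_left hIH hcpos.le
          linarith
      _ = w a * conj Φ (y a) + ∑ i ∈ s, w i * conj Φ (y i) := by rw [e4]

lemma delta2_global (hΦ : IsYoung Φ) (hΔ : Delta2 Φ) :
    ∃ C D : ℝ, 3 ≤ C ∧ 0 ≤ D ∧ ∀ x, Φ (2 * x) ≤ C * Φ x + D := by
  obtain ⟨C, x₀, hC⟩ := hΔ
  refine ⟨max C 3, Φ (2 * max x₀ 0), le_max_right _ _, young_nonneg hΦ _, ?_⟩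
  intro x
  have hx : Φ (2 * x) = Φ (2 * |x|) := by
    rcases abs_cases x with ⟨h, _⟩ | ⟨h, _⟩
    · rw [h]
    · rw [h, show 2 * -x = -(2 * x) by ring, hΦ.even]
  have hx2 : Φ x = Φ |x| := (young_abs hΦ x).symm
  rw [hx, hx2]
  have hz0 : 0 ≤ |x| := abs_nonneg x
  by_cases hz : max x₀ 0 ≤ |x|
  · have h1 : Φ (2 * |x|) ≤ C * Φ |x| := hC |x| (le_trans (le_max_left _ _) hz)
    have h2 : C * Φ |x| ≤ max C 3 * Φ |x| :=
      mul_le_mul_of_nonneg_right (le_max_left _ _) (young_nonneg hΦ _)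
    have h3 : 0 ≤ Φ (2 * max x₀ 0) := young_nonneg hΦ _
    linarith
  · push_neg at hz
    have hm0 : (0:ℝ) ≤ max x₀ 0 := le_max_right _ _
    have h1 : Φ (2 * |x|) ≤ Φ (2 * max x₀ 0) := young_mono hΦ (by linarith) (by linarith)
    have h2 : 0 ≤ max C 3 * Φ |x| :=
      mul_nonneg (by linarith [le_max_right C 3]) (young_nonneg hΦ _)
    linarith

lemma conj_delta_step (hΦ : IsYoung Φ) {C D : ℝ} (hC : 3 ≤ C) (hD : 0 ≤ D)
    (h : ∀ x, Φ (2 * x) ≤ C * Φ x + D) (y : ℝ) :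
    conj Φ y ≤ (conj Φ (C / 2 * y) + D) / C := by
  have hC0 : (0:ℝ) < C := by linarith
  apply conj_le
  intro x
  rw [le_div_iff₀ hC0]
  have h1 := le_conj hΦ (C / 2 * y) (2 * x)
  have h2 := h x
  nlinarith [h1, h2]

lemma conj_delta_pow (hΦ : IsYoung Φ) {C D : ℝ} (hC : 3 ≤ C) (hD : 0 ≤ D)
    (h : ∀ x, Φ (2 * x) ≤ C * Φ x + D) :
    ∀ (m : ℕ) (y : ℝ), conj Φ (y / (C / 2) ^ m) ≤ conj Φ y / C ^ m + D := by
  have hC0 : (0:ℝ) < C := by linarith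
  have hκ0 : (0:ℝ) < C / 2 := by linarith
  have main : ∀ (m : ℕ) (y : ℝ),
      conj Φ (y / (C / 2) ^ m) ≤ conj Φ y / C ^ m + D * (1 - (1 / C) ^ m) := by
    intro m
    induction m with
    | zero => intro y; simp
    | succ m ih =>
      intro y
      have hκm : (0:ℝ) < (C / 2) ^ m := pow_pos hκ0 m
      have hCm : (0:ℝ) < C ^ m := pow_pos hC0 m
      have e1 : y / (C / 2) ^ (m + 1) = y / (C / 2) / (C / 2) ^ m := by
        rw [pow_succ]
        field_simp
      rw [e1]
      have h2 := ih (y / (C / 2))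
      have h3 : conj Φ (y / (C / 2)) ≤ (conj Φ y + D) / C := by
        have h4 := conj_delta_step hΦ hC hD h (y / (C / 2))
        rwa [mul_div_cancel₀ y (ne_of_gt hκ0)] at h4
      have h5 : conj Φ (y / (C / 2)) / C ^ m ≤ (conj Φ y + D) / C / C ^ m := by
        gcongr
      have e2 : (conj Φ y + D) / C / C ^ m = conj Φ y / C ^ (m + 1) + D * (1 / C) ^ (m + 1) := by
        rw [div_pow, one_pow, pow_succ, div_div, mul_one_div, ← add_div, mul_comm C]
      have hu0 : (0:ℝ) < (1 / C) ^ m := pow_pos (by positivity) m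
      have hu1 : (1 / C) ^ (m + 1) = (1 / C) ^ m * (1 / C) := pow_succ _ _
      have hCinv : 2 * (1 / C) ≤ 1 := by
        rw [mul_one_div]
        rw [div_le_one hC0]
        linarith
      have goalarith : D * (1 / C) ^ (m + 1) + D * (1 - (1 / C) ^ m)
          ≤ D * (1 - (1 / C) ^ (m + 1)) := by
        rw [hu1]
        have hDu : 0 ≤ D * (1 / C) ^ m := mul_nonneg hD hu0.le
        have key : D * (1 / C) ^ m * (2 * (1 / C)) ≤ D * (1 / C) ^ m * 1 :=
          mul_le_mul_of_nonneg_left hCinv hDu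
        nlinarith [key]
      calc conj Φ (y / (C / 2) / (C / 2) ^ m)
          ≤ conj Φ (y / (C / 2)) / C ^ m + D * (1 - (1 / C) ^ m) := h2
      _ ≤ (conj Φ y + D) / C / C ^ m + D * (1 - (1 / C) ^ m) := by linarith
      _ = conj Φ y / C ^ (m + 1) + (D * (1 / C) ^ (m + 1) + D * (1 - (1 / C) ^ m)) := by
            rw [e2]; ring
      _ ≤ conj Φ y / C ^ (m + 1) + D * (1 - (1 / C) ^ (m + 1)) := by linarith
  intro m y
  have h6 := main m y
  have h7 : (0:ℝ) ≤ (1 / C) ^ m := by positivity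
  nlinarith [h6, h7, hD]

lemma conj_dilute (hΦ : IsYoung Φ) {C D : ℝ} (hC : 3 ≤ C) (hD : 0 ≤ D)
    (h : ∀ x, Φ (2 * x) ≤ C * Φ x + D) :
    ∃ p : ℝ, 1 < p ∧ ∀ (i : ℕ) (z : ℝ), 0 ≤ z →
      conj Φ (z / ((i : ℝ) + 1)) ≤ C * ((i : ℝ) + 1) ^ (-p) * conj Φ z + D := by
  have hC0 : (0:ℝ) < C := by linarith
  have hκ1 : (1:ℝ) < C / 2 := by linarith
  have hκ0 : (0:ℝ) < C / 2 := by linarith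
  have hlogκ : 0 < Real.log (C / 2) := Real.log_pos hκ1
  have hlogC : 0 < Real.log C := Real.log_pos (by linarith)
  refine ⟨Real.log C / Real.log (C / 2), ?_, ?_⟩
  · rw [lt_div_iff₀ hlogκ, one_mul]
    exact Real.log_lt_log hκ0 (by linarith)
  intro i z hz
  set m := ⌊Real.log ((i : ℝ) + 1) / Real.log (C / 2)⌋₊ with hm
  have hi1 : (1:ℝ) ≤ (i : ℝ) + 1 := by
    have : (0:ℝ) ≤ (i : ℝ) := Nat.cast_nonneg i
    linarith
  have hi0 : (0:ℝ) < (i : ℝ) + 1 := by linarith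
  have hlogi : 0 ≤ Real.log ((i : ℝ) + 1) := Real.log_nonneg hi1
  have hκm : (0:ℝ) < (C / 2) ^ m := pow_pos hκ0 m
  have hexpκ : ((C / 2 : ℝ)) ^ m = Real.exp ((m : ℝ) * Real.log (C / 2)) := by
    rw [← Real.log_pow, Real.exp_log hκm]
  have h1 : ((C / 2 : ℝ)) ^ m ≤ (i : ℝ) + 1 := by
    have hfl : (m : ℝ) ≤ Real.log ((i : ℝ) + 1) / Real.log (C / 2) :=
      Nat.floor_le (div_nonneg hlogi hlogκ.le)
    have h2 : (m : ℝ) * Real.log (C / 2) ≤ Real.log ((i : ℝ) + 1) := by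
      calc (m : ℝ) * Real.log (C / 2)
          ≤ Real.log ((i : ℝ) + 1) / Real.log (C / 2) * Real.log (C / 2) :=
            mul_le_mul_of_nonneg_right hfl hlogκ.le
      _ = Real.log ((i : ℝ) + 1) := by field_simp
    calc ((C / 2 : ℝ)) ^ m = Real.exp ((m : ℝ) * Real.log (C / 2)) := hexpκ
    _ ≤ Real.exp (Real.log ((i : ℝ) + 1)) := Real.exp_le_exp.2 h2
    _ = (i : ℝ) + 1 := Real.exp_log hi0
  have h4 : conj Φ (z / ((i : ℝ) + 1)) ≤ conj Φ (z / (C / 2) ^ m) := by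
    apply conj_mono hΦ (by positivity)
    gcongr
  have h5 := conj_delta_pow hΦ hC hD h m z
  have h7 : ((i : ℝ) + 1) ^ (Real.log C / Real.log (C / 2)) ≤ C ^ (m + 1) := by
    rw [Real.rpow_def_of_pos hi0]
    have h8 : Real.log ((i : ℝ) + 1) / Real.log (C / 2) < (m : ℝ) + 1 := Nat.lt_floor_add_one _
    have h9 : Real.log ((i : ℝ) + 1) * (Real.log C / Real.log (C / 2))
        ≤ ((m : ℝ) + 1) * Real.log C := by
      have e : Real.log ((i : ℝ) + 1) * (Real.log C / Real.log (C / 2))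
          = (Real.log ((i : ℝ) + 1) / Real.log (C / 2)) * Real.log C := by ring
      rw [e]
      exact mul_le_mul_of_nonneg_right h8.le hlogC.le
    calc Real.exp (Real.log ((i : ℝ) + 1) * (Real.log C / Real.log (C / 2)))
        ≤ Real.exp (((m : ℝ) + 1) * Real.log C) := Real.exp_le_exp.2 h9
    _ = C ^ (m + 1) := by
        rw [show ((m : ℝ) + 1) = ((m + 1 : ℕ) : ℝ) by push_cast; ring,
          ← Real.log_pow, Real.exp_log (pow_pos hC0 _)]
  have hip : (0:ℝ) < ((i : ℝ) + 1) ^ (Real.log C / Real.log (C / 2)) :=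
    Real.rpow_pos_of_pos hi0 _
  have h6 : (1:ℝ) / C ^ m ≤ C * ((i : ℝ) + 1) ^ (-(Real.log C / Real.log (C / 2))) := by
    rw [Real.rpow_neg hi0.le, ← div_eq_mul_inv]
    have h10 : C / C ^ (m + 1) ≤ C / ((i : ℝ) + 1) ^ (Real.log C / Real.log (C / 2)) := by
      apply div_le_div_of_nonneg_left hC0.le hip h7
    have e3 : C / C ^ (m + 1) = 1 / C ^ m := by
      rw [pow_succ]
      field_simp
    rw [← e3]
    exact h10
  have hconjz : 0 ≤ conj Φ z := conj_nonneg hΦ z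
  calc conj Φ (z / ((i : ℝ) + 1)) ≤ conj Φ (z / (C / 2) ^ m) := h4
  _ ≤ conj Φ z / C ^ m + D := h5
  _ = 1 / C ^ m * conj Φ z + D := by rw [one_div, inv_mul_eq_div]
  _ ≤ C * ((i : ℝ) + 1) ^ (-(Real.log C / Real.log (C / 2))) * conj Φ z + D := by
      have := mul_le_mul_of_nonneg_right h6 hconjz
      linarith

end AuxConj

section AuxModular

variable {Ω : Type*} [MeasurableSpace Ω] {P : Measure Ω} {Φ : ℝ → ℝ}

lemma memOrlicz_modular (hΦ : IsYoung Φ) {f : Ω → ℝ} (hf : MemOrlicz P (conj Φ) f) :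
    ∃ A : ℝ, 0 < A ∧ ∫⁻ ω, ENNReal.ofReal (conj Φ (f ω / A)) ∂P ≤ 1 := by
  obtain ⟨hmeas, l, hl, hK⟩ := hf
  set K := ∫⁻ ω, ENNReal.ofReal (conj Φ (l * f ω)) ∂P with hKdef
  set T := K.toReal + 1 with hTdef
  have hT1 : (1:ℝ) ≤ T := by
    have : (0:ℝ) ≤ K.toReal := ENNReal.toReal_nonneg
    rw [hTdef]; linarith
  have hT0 : (0:ℝ) < T := lt_of_lt_of_le one_pos hT1
  have hKT : K ≤ ENNReal.ofReal T := by
    rw [← ENNReal.ofReal_toReal hK.ne]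
    exact ENNReal.ofReal_le_ofReal (by rw [hTdef]; linarith)
  refine ⟨T / l, div_pos hT0 hl, ?_⟩
  have hpt : ∀ ω, conj Φ (f ω / (T / l)) ≤ 1 / T * conj Φ (l * f ω) := by
    intro ω
    have e : f ω / (T / l) = 1 / T * (l * f ω) := by
      field_simp
    rw [e]
    exact conj_smul_le hΦ (by positivity) (by rw [div_le_one hT0]; linarith) _
  calc ∫⁻ ω, ENNReal.ofReal (conj Φ (f ω / (T / l))) ∂P
      ≤ ∫⁻ ω, ENNReal.ofReal (1 / T) * ENNReal.ofReal (conj Φ (l * f ω)) ∂P := by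
        apply lintegral_mono
        intro ω
        exact le_trans (ENNReal.ofReal_le_ofReal (hpt ω))
          (le_of_eq (ENNReal.ofReal_mul (by positivity)))
  _ = ENNReal.ofReal (1 / T) * K := lintegral_const_mul' _ _ ENNReal.ofReal_ne_top
  _ ≤ ENNReal.ofReal (1 / T) * ENNReal.ofReal T := mul_le_mul_right hKT _
  _ = ENNReal.ofReal (1 / T * T) := (ENNReal.ofReal_mul (by positivity)).symm
  _ = 1 := by rw [one_div_mul_cancel (ne_of_gt hT0), ENNReal.ofReal_one]

lemma luxNorm_modular (hΦ : IsYoung Φ) {f : Ω → ℝ} {M : ℝ}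
    (hf : MemOrlicz P (conj Φ) f) (hM : luxNorm P (conj Φ) f ≤ M) :
    ∫⁻ ω, ENNReal.ofReal (conj Φ (f ω / (M + 1))) ∂P ≤ 1 := by
  obtain ⟨A, hA, hAle⟩ := memOrlicz_modular hΦ hf
  have hS : A ∈ {l : ℝ | 0 < l ∧ ∫⁻ ω, ENNReal.ofReal (conj Φ (f ω / l)) ∂P ≤ 1} :=
    ⟨hA, hAle⟩
  have hlt : sInf {l : ℝ | 0 < l ∧ ∫⁻ ω, ENNReal.ofReal (conj Φ (f ω / l)) ∂P ≤ 1} < M + 1 :=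
    lt_of_le_of_lt hM (lt_add_one M)
  obtain ⟨l, hlS, hl⟩ := exists_lt_of_csInf_lt ⟨A, hS⟩ hlt
  have hl0 : 0 < l := hlS.1
  have hM1 : 0 < M + 1 := hl0.trans hl
  refine le_trans (lintegral_mono fun ω => ENNReal.ofReal_le_ofReal ?_) hlS.2
  apply conj_mono_abs hΦ
  rw [abs_div, abs_div, abs_of_pos hM1, abs_of_pos hl0]
  exact div_le_div_of_nonneg_left (abs_nonneg _) hl0 hl.le

lemma modular_sub (hΦ : IsYoung Φ) {f g : Ω → ℝ} {A B : ℝ} (hA : 0 < A) (hB : 0 < B)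
    (hfm : Measurable f) (hgm : Measurable g)
    (hfA : ∫⁻ ω, ENNReal.ofReal (conj Φ (f ω / A)) ∂P ≤ 1)
    (hgB : ∫⁻ ω, ENNReal.ofReal (conj Φ (g ω / B)) ∂P ≤ 1) :
    ∫⁻ ω, ENNReal.ofReal (conj Φ ((f ω - g ω) / (A + B))) ∂P ≤ 1 := by
  have hAB : (0:ℝ) < A + B := by linarith
  have hpt : ∀ ω, conj Φ ((f ω - g ω) / (A + B)) ≤
      A / (A + B) * conj Φ (f ω / A) + B / (A + B) * conj Φ (g ω / B) := by
    intro ω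
    have e : (f ω - g ω) / (A + B) = A / (A + B) * (f ω / A) + B / (A + B) * (-g ω / B) := by
      field_simp
      ring
    rw [e]
    have h := conj_comb_le hΦ (t := A / (A + B)) (s := B / (A + B)) (by positivity)
      (by positivity) (by rw [← add_div, div_self (ne_of_gt hAB)]) (f ω / A) (-g ω / B)
    have e2 : conj Φ (-g ω / B) = conj Φ (g ω / B) := by
      rw [neg_div, conj_even hΦ]
    rwa [e2] at h
  have hm1 : Measurable fun ω => ENNReal.ofReal (conj Φ (f ω / A)) :=
    ((conj_meas hΦ).comp (hfm.div_const A)).ennreal_ofReal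
  calc ∫⁻ ω, ENNReal.ofReal (conj Φ ((f ω - g ω) / (A + B))) ∂P
      ≤ ∫⁻ ω, (ENNReal.ofReal (A / (A + B)) * ENNReal.ofReal (conj Φ (f ω / A))
          + ENNReal.ofReal (B / (A + B)) * ENNReal.ofReal (conj Φ (g ω / B))) ∂P := by
        apply lintegral_mono
        intro ω
        have h1 : 0 ≤ A / (A + B) * conj Φ (f ω / A) :=
          mul_nonneg (by positivity) (conj_nonneg hΦ _)
        have h2 : 0 ≤ B / (A + B) * conj Φ (g ω / B) :=
          mul_nonneg (by positivity) (conj_nonneg hΦ _)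
        calc ENNReal.ofReal (conj Φ ((f ω - g ω) / (A + B)))
            ≤ ENNReal.ofReal (A / (A + B) * conj Φ (f ω / A)
                + B / (A + B) * conj Φ (g ω / B)) := ENNReal.ofReal_le_ofReal (hpt ω)
        _ = _ := by
            rw [ENNReal.ofReal_add h1 h2, ENNReal.ofReal_mul (by positivity),
              ENNReal.ofReal_mul (by positivity)]
  _ = ENNReal.ofReal (A / (A + B)) * ∫⁻ ω, ENNReal.ofReal (conj Φ (f ω / A)) ∂P
      + ENNReal.ofReal (B / (A + B)) * ∫⁻ ω, ENNReal.ofReal (conj Φ (g ω / B)) ∂P := by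
        rw [lintegral_add_left (hm1.const_mul _), lintegral_const_mul' _ _ ENNReal.ofReal_ne_top,
          lintegral_const_mul' _ _ ENNReal.ofReal_ne_top]
  _ ≤ ENNReal.ofReal (A / (A + B)) * 1 + ENNReal.ofReal (B / (A + B)) * 1 := by
        exact add_le_add (mul_le_mul_right hfA _) (mul_le_mul_right hgB _)
  _ = 1 := by
        rw [mul_one, mul_one, ← ENNReal.ofReal_add (by positivity) (by positivity)]
        rw [show A / (A + B) + B / (A + B) = 1 by field_simp]
        exact ENNReal.ofReal_one

lemma exists_absCont {G : Ω → ℝ≥0∞} (hG : Measurable G) (hfin : ∫⁻ ω, G ω ∂P ≠ ⊤)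
    {ε : ℝ≥0∞} (hε : 0 < ε) (hεtop : ε ≠ ⊤) :
    ∃ δ : ℝ≥0∞, 0 < δ ∧ ∀ E : Set Ω, MeasurableSet E → P E ≤ δ →
      ∫⁻ ω in E, G ω ∂P ≤ ε := by
  have hmeasn : ∀ n : ℕ, Measurable fun ω => ({ω' | (n : ℝ≥0∞) < G ω'}).indicator G ω :=
    fun n => hG.indicator (measurableSet_lt measurable_const hG)
  have htail : Tendsto (fun n : ℕ => ∫⁻ ω, ({ω' | (n : ℝ≥0∞) < G ω'}).indicator G ω ∂P)
      atTop (𝓝 (∫⁻ _ω, (0 : ℝ≥0∞) ∂P)) := by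
    apply tendsto_lintegral_of_dominated_convergence G hmeasn
      (fun n => Filter.Eventually.of_forall fun ω => Set.indicator_le_self _ _ ω) hfin
    filter_upwards [ae_lt_top hG hfin] with ω hω
    obtain ⟨n₀, hn₀⟩ := ENNReal.exists_nat_gt hω.ne
    refine Tendsto.congr' ?_ tendsto_const_nhds
    filter_upwards [eventually_ge_atTop n₀] with n hn
    symm
    apply Set.indicator_of_notMem
    simp only [Set.mem_setOf_eq, not_lt]
    calc G ω ≤ (n₀ : ℝ≥0∞) := hn₀.le
    _ ≤ (n : ℝ≥0∞) := by exact_mod_cast hn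
  rw [lintegral_zero] at htail
  have hε2 : (0:ℝ≥0∞) < ε / 2 := ENNReal.div_pos hε.ne' (by norm_num)
  obtain ⟨n₀, hn₀⟩ := (eventually_atTop.mp (htail.eventually (gt_mem_nhds hε2))) 
  have htail0 : ∫⁻ ω, ({ω' | ((n₀:ℕ) : ℝ≥0∞) < G ω'}).indicator G ω ∂P ≤ ε / 2 :=
    (hn₀ n₀ le_rfl).le
  refine ⟨ε / 2 / ((n₀ : ℝ≥0∞) + 1), ENNReal.div_pos hε2.ne' (by simp [ENNReal.add_eq_top]), ?_⟩
  intro E hE hPE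
  have hpt : ∀ ω, G ω ≤ ((n₀:ℕ) : ℝ≥0∞) + ({ω' | ((n₀:ℕ) : ℝ≥0∞) < G ω'}).indicator G ω := by
    intro ω
    rcases le_or_gt (G ω) ((n₀:ℕ) : ℝ≥0∞) with h | h
    · exact le_trans h (le_add_of_nonneg_right zero_le)
    · have hmem : ω ∈ {ω' | ((n₀:ℕ) : ℝ≥0∞) < G ω'} := h
      rw [Set.indicator_of_mem hmem]
      exact le_add_of_nonneg_left zero_le
  calc ∫⁻ ω in E, G ω ∂P
      ≤ ∫⁻ ω in E, (((n₀:ℕ) : ℝ≥0∞) + ({ω' | ((n₀:ℕ) : ℝ≥0∞) < G ω'}).indicator G ω) ∂P :=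
        lintegral_mono hpt
  _ = ((n₀:ℕ) : ℝ≥0∞) * P E + ∫⁻ ω in E, ({ω' | ((n₀:ℕ) : ℝ≥0∞) < G ω'}).indicator G ω ∂P := by
        rw [lintegral_add_left measurable_const, setLIntegral_const]
  _ ≤ ((n₀:ℕ) : ℝ≥0∞) * (ε / 2 / ((n₀ : ℝ≥0∞) + 1))
      + ∫⁻ ω, ({ω' | ((n₀:ℕ) : ℝ≥0∞) < G ω'}).indicator G ω ∂P := by
        exact add_le_add (mul_le_mul_right hPE _) (setLIntegral_le_lintegral _ _)
  _ ≤ (((n₀:ℕ) : ℝ≥0∞) + 1) * (ε / 2 / ((n₀ : ℝ≥0∞) + 1)) + ε / 2 := by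
        exact add_le_add (mul_le_mul_left (le_add_of_nonneg_right zero_le) _) htail0
  _ = ε / 2 + ε / 2 := by
        rw [ENNReal.mul_div_cancel' (by simp) (by simp [ENNReal.add_eq_top])]
  _ = ε := ENNReal.add_halves ε

end AuxModular

section AuxSeq

lemma tendsto_sup_attain {u : ℕ → ℝ} {a : ℝ} (hu : Tendsto u atTop (𝓝 a)) :
    (∃ N, (⨆ n, u n) = u N) ∨ (⨆ n, u n) = a := by
  have hbdd : BddAbove (Set.range u) := hu.bddAbove_range
  by_cases h : ∃ N, (⨆ n, u n) = u N
  · exact Or.inl h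
  push_neg at h
  right
  set s := ⨆ n, u n with hs
  have hlt : ∀ n, u n < s := fun n => lt_of_le_of_ne (le_ciSup hbdd n) fun he => h n he.symm
  have has : a ≤ s := le_of_tendsto hu (Filter.Eventually.of_forall fun n => le_ciSup hbdd n)
  rcases eq_or_lt_of_le has with he | hlt2
  · exact he.symm
  exfalso
  have hmid : a < (a + s) / 2 := by linarith
  have hmid2 : (a + s) / 2 < s := by linarith
  obtain ⟨N₀, hN₀⟩ := eventually_atTop.mp (hu.eventually_lt_const hmid)
  rcases Nat.eq_zero_or_pos N₀ with h0 | hpos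
  · have hb' : (a + s) / 2 < ⨆ n, u n := by rw [← hs]; exact hmid2
    obtain ⟨n, hn⟩ := exists_lt_of_lt_ciSup hb'
    exact absurd (hN₀ n (h0 ▸ Nat.zero_le n)) (not_lt.2 hn.le)
  · have hne : (Finset.range N₀).Nonempty := ⟨0, Finset.mem_range.2 hpos⟩
    have hMlt : (Finset.range N₀).sup' hne u < s := (Finset.sup'_lt_iff hne).2 fun n _ => hlt n
    have hb : max ((Finset.range N₀).sup' hne u) ((a + s) / 2) < ⨆ n, u n := by
      rw [← hs]; exact max_lt hMlt hmid2
    obtain ⟨n, hn⟩ := exists_lt_of_lt_ciSup hb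
    rcases lt_or_ge n N₀ with hcase | hcase
    · have hle : u n ≤ (Finset.range N₀).sup' hne u := Finset.le_sup' u (Finset.mem_range.2 hcase)
      exact absurd hn (not_lt.2 (hle.trans (le_max_left _ _)))
    · have hle : u n < (a + s) / 2 := hN₀ n hcase
      exact absurd hn (not_lt.2 (hle.le.trans (le_max_right _ _)))

lemma realSup_eq_toReal (u : ℕ → ℝ) (hu : ∀ n, 0 ≤ u n) :
    (⨆ n, u n) = (⨆ n, ENNReal.ofReal (u n)).toReal := by
  by_cases hb : BddAbove (Set.range u)
  · have h1 : (⨆ n, ENNReal.ofReal (u n)) = ENNReal.ofReal (⨆ n, u n) := by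
      apply le_antisymm
      · exact iSup_le fun n => ENNReal.ofReal_le_ofReal (le_ciSup hb n)
      · by_cases htop : (⨆ n, ENNReal.ofReal (u n)) = ⊤
        · rw [htop]; exact le_top
        · rw [ENNReal.ofReal_le_iff_le_toReal htop]
          apply ciSup_le
          intro n
          calc u n = (ENNReal.ofReal (u n)).toReal := (ENNReal.toReal_ofReal (hu n)).symm
          _ ≤ _ := ENNReal.toReal_mono htop (le_iSup (fun n => ENNReal.ofReal (u n)) n)
    rw [h1, ENNReal.toReal_ofReal (le_trans (hu 0) (le_ciSup hb 0))]
  · rw [Real.iSup_of_not_bddAbove hb]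
    have h2 : (⨆ n, ENNReal.ofReal (u n)) = ⊤ := by
      by_contra htop
      apply hb
      refine ⟨(⨆ n, ENNReal.ofReal (u n)).toReal, ?_⟩
      rintro x ⟨n, rfl⟩
      calc u n = (ENNReal.ofReal (u n)).toReal := (ENNReal.toReal_ofReal (hu n)).symm
      _ ≤ _ := ENNReal.toReal_mono htop (le_iSup (fun n => ENNReal.ofReal (u n)) n)
    rw [h2, ENNReal.toReal_top]

lemma tendsto_cesaro_succ {u : ℕ → ℝ} {a : ℝ} (hu : Tendsto u atTop (𝓝 a)) :
    Tendsto (fun N : ℕ => (∑ i ∈ Finset.range (N + 1), u i) / ((N : ℝ) + 1)) atTop (𝓝 a) := by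
  have h2 := hu.cesaro.comp (tendsto_add_atTop_nat 1)
  apply h2.congr
  intro N
  simp only [Function.comp_apply]
  push_cast
  rw [div_eq_inv_mul]

end AuxSeq

set_option maxHeartbeats 2000000 in
/-- Komlós-type theorem, basic version. If `Φ ∈ Δ₂` and
`(ξ_n)` is norm bounded in `L_{Φ*}` and converges in probability to
`ξ ∈ L_{Φ*}`, then some subsequence has the property that the Cesàro means of
every further subsequence converge in order to `ξ`. -/
theorem statement8
    {Ω : Type*} [MeasurableSpace Ω] (P : Measure Ω) [IsProbabilityMeasure P]
    (Φ : ℝ → ℝ) (hΦ : IsYoung Φ) (hΔ : Delta2 Φ)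
    (ξ : ℕ → Ω → ℝ) (hmem : ∀ n, MemOrlicz P (conj Φ) (ξ n))
    (hbdd : ∃ M : ℝ, ∀ n, luxNorm P (conj Φ) (ξ n) ≤ M)
    (ξ₀ : Ω → ℝ) (h₀ : MemOrlicz P (conj Φ) ξ₀)
    (hprob : TendstoInMeasure P ξ atTop ξ₀) :
    ∃ n : ℕ → ℕ, StrictMono n ∧
      ∀ k : ℕ → ℕ, StrictMono k →
        supMem P (conj Φ) (cesaro (fun i => ξ (n (k i)))) ∧
        ∀ᵐ ω ∂P,
          Tendsto (fun N => cesaro (fun i => ξ (n (k i))) N ω) atTop (𝓝 (ξ₀ ω)) := by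
  classical
  obtain ⟨M, hM⟩ := hbdd
  obtain ⟨M₀, hM₀pos, hM₀⟩ := memOrlicz_modular hΦ h₀
  obtain ⟨C, D, hC, hD, hCD⟩ := delta2_global hΦ hΔ
  obtain ⟨p, hp, hdil⟩ := conj_dilute hΦ hC hD hCD
  have hMn : ∀ m, ∫⁻ ω, ENNReal.ofReal (conj Φ (ξ m ω / (M + 1))) ∂P ≤ 1 :=
    fun m => luxNorm_modular hΦ (hmem m) (hM m)
  have hM0 : (0:ℝ) ≤ M := le_trans (Real.sInf_nonneg fun x hx => hx.1.le) (hM 0)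
  set M' : ℝ := M + 1 + M₀ with hM'def
  have hM'pos : (0:ℝ) < M' := by rw [hM'def]; linarith
  have hξm : ∀ m, Measurable (ξ m) := fun m => (hmem m).1
  have hξ₀m : Measurable ξ₀ := h₀.1
  have hη : ∀ m, ∫⁻ ω, ENNReal.ofReal (conj Φ ((ξ m ω - ξ₀ ω) / M')) ∂P ≤ 1 := by
    intro m
    rw [hM'def]
    exact modular_sub hΦ (by linarith) hM₀pos (hξm m) hξ₀m (hMn m) hM₀
  -- the scale
  set l₁ : ℝ := min (1 / M') (1 / M₀) / 4 with hl₁def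
  have hmin : 0 < min (1 / M') (1 / M₀) := lt_min (by positivity) (by positivity)
  have hl₁pos : 0 < l₁ := by rw [hl₁def]; positivity
  have h4l₁M' : 4 * l₁ ≤ 1 / M' := by
    rw [hl₁def]
    have := min_le_left (1 / M') (1 / M₀)
    linarith
  have h4l₁M₀ : 4 * l₁ ≤ 1 / M₀ := by
    rw [hl₁def]
    have := min_le_right (1 / M') (1 / M₀)
    linarith
  -- candidate sets and past-modular functions
  set ε : ℕ → ℝ := fun j => (1 / 2 : ℝ) ^ j with hεdef
  have hεpos : ∀ j, 0 < ε j := fun j => by rw [hεdef]; positivity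
  set Bset : ℕ → ℕ → Set Ω := fun j m => {ω | ε j ≤ |ξ m ω - ξ₀ ω|} with hBsetdef
  have hBmeas : ∀ j m, MeasurableSet (Bset j m) :=
    fun j m => measurableSet_le measurable_const ((hξm m).sub hξ₀m).abs
  set Gfun : (ℕ → ℕ) → ℕ → Ω → ℝ≥0∞ := fun g j ω =>
    ∑ j' ∈ Finset.range j, ENNReal.ofReal (conj Φ ((ξ (g j') ω - ξ₀ ω) / M')) with hGdef
  have hGmeas : ∀ g j, Measurable (Gfun g j) := by
    intro g j
    apply Finset.measurable_sum
    intro j' _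
    exact ((conj_meas hΦ).comp (((hξm (g j')).sub hξ₀m).div_const M')).ennreal_ofReal
  have hGfin : ∀ g j, ∫⁻ ω, Gfun g j ω ∂P ≠ ⊤ := by
    intro g j
    have he : ∫⁻ ω, Gfun g j ω ∂P
        = ∑ j' ∈ Finset.range j, ∫⁻ ω, ENNReal.ofReal (conj Φ ((ξ (g j') ω - ξ₀ ω) / M')) ∂P :=
      lintegral_finset_sum _ fun j' _ =>
        ((conj_meas hΦ).comp (((hξm (g j')).sub hξ₀m).div_const M')).ennreal_ofReal
    rw [he]
    have hle : (∑ j' ∈ Finset.range j,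
        ∫⁻ ω, ENNReal.ofReal (conj Φ ((ξ (g j') ω - ξ₀ ω) / M')) ∂P) ≤ (j : ℝ≥0∞) := by
      calc _ ≤ ∑ _j' ∈ Finset.range j, (1 : ℝ≥0∞) := Finset.sum_le_sum fun j' _ => hη (g j')
      _ = (j : ℝ≥0∞) := by simp
    exact ne_top_of_le_ne_top (ENNReal.natCast_ne_top j) hle
  have hstep : ∀ (j : ℕ) (g : ℕ → ℕ) (prev : ℕ), ∃ m, prev < m ∧
      P (Bset j m) ≤ ENNReal.ofReal (ε j) ∧
      ∫⁻ ω in Bset j m, Gfun g j ω ∂P ≤ ENNReal.ofReal (ε j) := by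
    intro j g prev
    obtain ⟨δ, hδpos, hδ⟩ := exists_absCont (hGmeas g j) (hGfin g j)
      (ENNReal.ofReal_pos.2 (hεpos j)) ENNReal.ofReal_ne_top
    have htend := (tendstoInMeasure_iff_dist.1 hprob) (ε j) (hεpos j)
    have hsets : ∀ m, {x | ε j ≤ dist (ξ m x) (ξ₀ x)} = Bset j m := by
      intro m
      ext x
      simp [hBsetdef, Real.dist_eq]
    have hev1 : ∀ᶠ m in atTop, P (Bset j m) < ENNReal.ofReal (ε j) := by
      filter_upwards [htend.eventually
        (gt_mem_nhds (ENNReal.ofReal_pos.2 (hεpos j)))] with m hm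
      rw [← hsets m]
      exact hm
    have hev2 : ∀ᶠ m in atTop, P (Bset j m) < δ := by
      filter_upwards [htend.eventually (gt_mem_nhds hδpos)] with m hm
      rw [← hsets m]
      exact hm
    obtain ⟨m, h1, h2, h3⟩ := ((hev1.and (hev2.and (eventually_gt_atTop prev))).exists)
    exact ⟨m, h3, h1.le, hδ _ (hBmeas j m) h2.le⟩
  -- recursive selection
  let pick : ℕ → (ℕ → ℕ) → ℕ → ℕ := fun j g prev => (hstep j g prev).choose
  let T : ℕ → ℕ → ℕ := fun j => Nat.rec (motive := fun _ => ℕ → ℕ)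
    (fun _ => pick 0 (fun _ => 0) 0)
    (fun j' g => Function.update g (j' + 1) (pick (j' + 1) g (g j'))) j
  have hTs : ∀ j : ℕ, T (j + 1) = Function.update (T j) (j + 1) (pick (j + 1) (T j) (T j j)) :=
    fun j => rfl
  have hTcoh : ∀ j j' : ℕ, j' ≤ j → T j j' = T j' j' := by
    intro j
    induction j with
    | zero => intro j' hj'; rw [Nat.le_zero.mp hj']
    | succ j ih =>
      intro j' hj'
      rcases Nat.lt_or_ge j' (j + 1) with hlt | hge
      · rw [hTs j, Function.update_of_ne (by omega)]
        exact ih j' (by omega)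
      · have he : j' = j + 1 := le_antisymm hj' hge
        rw [he]
  set n : ℕ → ℕ := fun j => T j j with hndef
  have hTn : ∀ j j' : ℕ, j' ≤ j → T j j' = n j' := fun j j' h => hTcoh j j' h
  have hn0 : n 0 = pick 0 (fun _ => 0) 0 := rfl
  have hns : ∀ j, n (j + 1) = pick (j + 1) (T j) (T j j) := by
    intro j
    show T (j + 1) (j + 1) = _
    rw [hTs j, Function.update_self]
  have hnmono : StrictMono n := by
    apply strictMono_nat_of_lt_succ
    intro j
    rw [hns j]
    exact (hstep (j + 1) (T j) (T j j)).choose_spec.1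
  have hGn : ∀ j, Gfun (T j) (j + 1) = Gfun n (j + 1) := by
    intro j
    funext ω
    apply Finset.sum_congr rfl
    intro j' hj'
    rw [hTn j j' (Nat.lt_succ_iff.mp (Finset.mem_range.mp hj'))]
  have hPB : ∀ j, P (Bset j (n j)) ≤ ENNReal.ofReal (ε j) := by
    intro j
    cases j with
    | zero => exact (hstep 0 (fun _ => 0) 0).choose_spec.2.1
    | succ j =>
      rw [hns j]
      exact (hstep (j + 1) (T j) (T j j)).choose_spec.2.1
  have hGB : ∀ j, ∫⁻ ω in Bset j (n j), Gfun n j ω ∂P ≤ ENNReal.ofReal (ε j) := by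
    intro j
    cases j with
    | zero =>
      have h := (hstep 0 (fun _ => 0) 0).choose_spec.2.2
      have he : Gfun (fun _ => 0) 0 = Gfun n 0 := by
        funext ω
        simp [hGdef]
      rw [← he]
      exact h
    | succ j =>
      have h := (hstep (j + 1) (T j) (T j j)).choose_spec.2.2
      rw [hns j, ← hGn j]
      exact h
  set η : ℕ → Ω → ℝ := fun j ω => ξ (n j) ω - ξ₀ ω with hηdef
  set B : ℕ → Set Ω := fun j => Bset j (n j) with hBdef2
  have hBmeas' : ∀ j, MeasurableSet (B j) := fun j => hBmeas j (n j)
  have hηm : ∀ j, Measurable (η j) := fun j => (hξm (n j)).sub hξ₀m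
  have hηmod : ∀ j, ∫⁻ ω, ENNReal.ofReal (conj Φ (η j ω / M')) ∂P ≤ 1 := fun j => hη (n j)
  have hsumB : ∑' j, P (B j) ≠ ⊤ := by
    have hsum : Summable ε := by
      rw [hεdef]
      exact summable_geometric_of_lt_one (by norm_num) (by norm_num)
    have h1 : ∑' j, P (B j) ≤ ENNReal.ofReal (∑' j, ε j) := by
      calc ∑' j, P (B j) ≤ ∑' j, ENNReal.ofReal (ε j) := ENNReal.tsum_le_tsum hPB
      _ = ENNReal.ofReal (∑' j, ε j) :=
          (ENNReal.ofReal_tsum_of_nonneg (fun j => (hεpos j).le) hsum).symm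
    exact ne_top_of_le_ne_top ENNReal.ofReal_ne_top h1
  have hBC : ∀ᵐ ω ∂P, ∀ᶠ j in atTop, ω ∉ B j := by
    have h0 := measure_limsup_atTop_eq_zero hsumB
    have h1 : ∀ᵐ ω ∂P, ω ∉ limsup B atTop := by
      rw [ae_iff]
      simpa using h0
    filter_upwards [h1] with ω hω
    rw [mem_limsup_iff_frequently_mem] at hω
    exact Filter.not_frequently.mp hω
  refine ⟨n, hnmono, ?_⟩
  intro k hk
  set g : ℕ → Ω → ℝ := fun j => (B j).indicator fun ω => |η j ω| with hgdef
  have hg0 : ∀ j ω, 0 ≤ g j ω := fun j ω => by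
    rw [hgdef]
    exact Set.indicator_nonneg (fun ω' _ => abs_nonneg _) ω
  have hgmem : ∀ j ω, ω ∈ B j → g j ω = |η j ω| := fun j ω h => by
    rw [hgdef]
    exact Set.indicator_of_mem h _
  have hgnot : ∀ j ω, ω ∉ B j → g j ω = 0 := fun j ω h => by
    rw [hgdef]
    exact Set.indicator_of_notMem h _
  have hgle : ∀ j ω, |η j ω| ≤ ε j + g j ω := by
    intro j ω
    by_cases h : ω ∈ B j
    · rw [hgmem j ω h]
      linarith [(hεpos j).le]
    · have h2 : ¬ ε j ≤ |η j ω| := h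
      rw [hgnot j ω h]
      push_neg at h2
      linarith
  have hN1 : ∀ N : ℕ, (0:ℝ) < (N : ℝ) + 1 := fun N => by positivity
  set avgg : ℕ → Ω → ℝ := fun N ω => (∑ i ∈ Finset.range (N + 1), g (k i) ω) / ((N : ℝ) + 1)
    with havgdef
  have havg0 : ∀ N ω, 0 ≤ avgg N ω := fun N ω => by
    rw [havgdef]
    exact div_nonneg (Finset.sum_nonneg fun i _ => hg0 _ _) (hN1 N).le
  have hces : ∀ N ω, cesaro (fun i => ξ (n (k i))) N ω
      = (∑ i ∈ Finset.range (N + 1), ξ (n (k i)) ω) / ((N : ℝ) + 1) := fun N ω => rfl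
  have hcesbound : ∀ N ω, |cesaro (fun i => ξ (n (k i))) N ω| ≤ |ξ₀ ω| + 2 + avgg N ω := by
    intro N ω
    rw [hces, abs_div, abs_of_pos (hN1 N), div_le_iff₀ (hN1 N)]
    have hterm : ∀ i, |ξ (n (k i)) ω| ≤ |ξ₀ ω| + (ε (k i) + g (k i) ω) := by
      intro i
      have h1 : |ξ (n (k i)) ω| ≤ |ξ₀ ω| + |η (k i) ω| := by
        have e : ξ (n (k i)) ω = ξ₀ ω + η (k i) ω := by rw [hηdef]; ring
        rw [e]
        exact abs_add_le _ _
      linarith [hgle (k i) ω]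
    have hsum1 : |∑ i ∈ Finset.range (N + 1), ξ (n (k i)) ω|
        ≤ ∑ i ∈ Finset.range (N + 1), (|ξ₀ ω| + (ε (k i) + g (k i) ω)) := by
      calc _ ≤ ∑ i ∈ Finset.range (N + 1), |ξ (n (k i)) ω| := Finset.abs_sum_le_sum_abs _ _
      _ ≤ _ := Finset.sum_le_sum fun i _ => hterm i
    have hsum2 : ∑ i ∈ Finset.range (N + 1), ε (k i) ≤ 2 := by
      calc ∑ i ∈ Finset.range (N + 1), ε (k i) ≤ ∑ i ∈ Finset.range (N + 1), (1 / 2 : ℝ) ^ i := by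
            apply Finset.sum_le_sum
            intro i _
            rw [hεdef]
            exact pow_le_pow_of_le_one (by norm_num) (by norm_num) hk.le_apply
      _ ≤ 2 := sum_geometric_two_le _
    have hdiv : avgg N ω * ((N : ℝ) + 1) = ∑ i ∈ Finset.range (N + 1), g (k i) ω := by
      rw [havgdef]
      field_simp
    have hcast : ((N + 1 : ℕ) : ℝ) = (N : ℝ) + 1 := by push_cast; ring
    have hNc : (0:ℝ) ≤ (N : ℝ) := Nat.cast_nonneg N
    calc |∑ i ∈ Finset.range (N + 1), ξ (n (k i)) ω|
        ≤ ∑ i ∈ Finset.range (N + 1), (|ξ₀ ω| + (ε (k i) + g (k i) ω)) := hsum1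
    _ = ((N : ℝ) + 1) * |ξ₀ ω| + (∑ i ∈ Finset.range (N + 1), ε (k i)
          + ∑ i ∈ Finset.range (N + 1), g (k i) ω) := by
        rw [Finset.sum_add_distrib, Finset.sum_add_distrib, Finset.sum_const,
          Finset.card_range, nsmul_eq_mul, hcast]
    _ ≤ ((N : ℝ) + 1) * |ξ₀ ω| + (2 * ((N : ℝ) + 1) + avgg N ω * ((N : ℝ) + 1)) := by
        rw [hdiv]
        linarith [hsum2]
    _ = (|ξ₀ ω| + 2 + avgg N ω) * ((N : ℝ) + 1) := by ring
  set ψ : ℕ → Ω → ℝ≥0∞ := fun i => (B (k i)).indicator fun ω =>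
      ENNReal.ofReal (C * ((i : ℝ) + 1) ^ (-p) * conj Φ (|η (k i) ω| / M') + D)
      + Gfun n (k i) ω
    with hψdef
  have habs : ∀ j ω, conj Φ (|η j ω| / M') = conj Φ (η j ω / M') := by
    intro j ω
    rw [show |η j ω| / M' = |η j ω / M'| by rw [abs_div, abs_of_pos hM'pos], conj_abs hΦ]
  have hψmeas : ∀ i, Measurable (ψ i) := by
    intro i
    rw [hψdef]
    apply Measurable.indicator ?_ (hBmeas' (k i))
    apply Measurable.fun_add
    · apply Measurable.ennreal_ofReal
      apply Measurable.add ?_ measurable_const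
      exact (((conj_meas hΦ).comp ((hηm (k i)).abs.div_const M')).const_mul _)
    · exact hGmeas n (k i)
  have hGη : ∀ j ω, Gfun n j ω
      = ∑ j' ∈ Finset.range j, ENNReal.ofReal (conj Φ (η j' ω / M')) := fun j ω => rfl
  have hF2 : ∀ N ω, ENNReal.ofReal (conj Φ (2 * l₁ * avgg N ω)) ≤ ∑' i, ψ i ω := by
    intro N ω
    set A := (Finset.range (N + 1)).filter (fun i => ω ∈ B (k i)) with hAdef
    by_cases hA : A.Nonempty
    · obtain ⟨imax, himaxA, hmax⟩ := A.exists_max_image (fun i => k i) hA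
      have himaxr : imax ∈ Finset.range (N + 1) := (Finset.mem_filter.mp himaxA).1
      have himaxB : ω ∈ B (k imax) := (Finset.mem_filter.mp himaxA).2
      have himaxN : (imax : ℝ) + 1 ≤ (N : ℝ) + 1 := by
        have h1 : imax ≤ N := Nat.lt_succ_iff.mp (Finset.mem_range.mp himaxr)
        have h2 : (imax : ℝ) ≤ (N : ℝ) := Nat.cast_le.2 h1
        linarith
      have hsumA : ∑ i ∈ Finset.range (N + 1), g (k i) ω = ∑ i ∈ A, g (k i) ω := by
        symm
        apply Finset.sum_subset (Finset.filter_subset _ _)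
        intro x hx hnx
        exact hgnot _ _ fun hmem => hnx (Finset.mem_filter.2 ⟨hx, hmem⟩)
      have hsplit : ∑ i ∈ A, g (k i) ω = g (k imax) ω + ∑ i ∈ A.erase imax, g (k i) ω :=
        (Finset.add_sum_erase A _ himaxA).symm
      have hcard : ((A.erase imax).card : ℝ) ≤ (N : ℝ) := by
        have h1 : (A.erase imax).card = A.card - 1 := Finset.card_erase_of_mem himaxA
        have h2 : A.card ≤ N + 1 :=
          le_trans (Finset.card_filter_le _ _) (by rw [Finset.card_range])
        have h3 : (A.erase imax).card ≤ N := by omega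
        exact_mod_cast h3
      have e1 : 2 * l₁ * avgg N ω
          = 1/2 * (4 * l₁ * g (k imax) ω / ((N:ℝ)+1))
            + 1/2 * (4 * l₁ * (∑ i ∈ A.erase imax, g (k i) ω) / ((N:ℝ)+1)) := by
        simp only [havgdef]
        rw [hsumA, hsplit]
        field_simp
        ring
      have hsplitconj := conj_comb_le hΦ (t := 1/2) (s := 1/2) (by norm_num) (by norm_num)
        (by norm_num) (4 * l₁ * g (k imax) ω / ((N:ℝ)+1))
        (4 * l₁ * (∑ i ∈ A.erase imax, g (k i) ω) / ((N:ℝ)+1))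
      rw [← e1] at hsplitconj
      have hT1 : conj Φ (4 * l₁ * g (k imax) ω / ((N:ℝ)+1))
          ≤ C * ((imax : ℝ) + 1) ^ (-p) * conj Φ (|η (k imax) ω| / M') + D := by
        have hbase : 4 * l₁ * |η (k imax) ω| ≤ |η (k imax) ω| / M' := by
          calc 4 * l₁ * |η (k imax) ω| ≤ 1 / M' * |η (k imax) ω| :=
                mul_le_mul_of_nonneg_right h4l₁M' (abs_nonneg _)
          _ = |η (k imax) ω| / M' := by ring
        have ha1 : 4 * l₁ * g (k imax) ω / ((N:ℝ)+1) ≤ (|η (k imax) ω| / M') / ((imax:ℝ)+1) := by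
          rw [hgmem _ _ himaxB]
          calc 4 * l₁ * |η (k imax) ω| / ((N:ℝ)+1)
              ≤ 4 * l₁ * |η (k imax) ω| / ((imax:ℝ)+1) :=
                div_le_div_of_nonneg_left (by positivity) (by positivity) himaxN
          _ ≤ (|η (k imax) ω| / M') / ((imax:ℝ)+1) := by gcongr
        calc conj Φ (4 * l₁ * g (k imax) ω / ((N:ℝ)+1))
            ≤ conj Φ ((|η (k imax) ω| / M') / ((imax:ℝ)+1)) :=
              conj_mono hΦ (div_nonneg (mul_nonneg (by positivity) (hg0 _ _)) (hN1 N).le) ha1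
        _ ≤ _ := hdil imax _ (by positivity)
      have hT2 : conj Φ (4 * l₁ * (∑ i ∈ A.erase imax, g (k i) ω) / ((N:ℝ)+1))
          ≤ ∑ j' ∈ Finset.range (k imax), conj Φ (|η j' ω| / M') := by
        have e2 : 4 * l₁ * (∑ i ∈ A.erase imax, g (k i) ω) / ((N:ℝ)+1)
            = ∑ i ∈ A.erase imax, (1/((N:ℝ)+1)) * (4 * l₁ * g (k i) ω) := by
          rw [Finset.mul_sum, Finset.sum_div]
          apply Finset.sum_congr rfl
          intro i _
          ring
        rw [e2]
        have hw1 : ∑ _i ∈ A.erase imax, (1/((N:ℝ)+1)) ≤ 1 := by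
          rw [Finset.sum_const, nsmul_eq_mul, mul_one_div, div_le_one (hN1 N)]
          exact hcard.trans (by linarith)
        have hstep1 := conj_sum_le hΦ (A.erase imax) (fun _ => 1/((N:ℝ)+1))
          (fun i => 4 * l₁ * g (k i) ω) (fun i _ => by positivity) hw1
        refine hstep1.trans ?_
        have hterm2 : ∀ i ∈ A.erase imax, (1/((N:ℝ)+1)) * conj Φ (4 * l₁ * g (k i) ω)
            ≤ conj Φ (|η (k i) ω| / M') := by
          intro i hi
          have hiA : i ∈ A := Finset.mem_of_mem_erase hi
          have hiB : ω ∈ B (k i) := (Finset.mem_filter.mp hiA).2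
          have h2 : conj Φ (4 * l₁ * g (k i) ω) ≤ conj Φ (|η (k i) ω| / M') := by
            apply conj_mono hΦ (mul_nonneg (by positivity) (hg0 _ _))
            rw [hgmem _ _ hiB]
            calc 4 * l₁ * |η (k i) ω| ≤ 1 / M' * |η (k i) ω| :=
                  mul_le_mul_of_nonneg_right h4l₁M' (abs_nonneg _)
            _ = |η (k i) ω| / M' := by ring
          have h3 : (1/((N:ℝ)+1)) * conj Φ (4 * l₁ * g (k i) ω)
              ≤ 1 * conj Φ (4 * l₁ * g (k i) ω) := by
            apply mul_le_mul_of_nonneg_right ?_ (conj_nonneg hΦ _)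
            rw [div_le_one (hN1 N)]
            have hc0 : (0:ℝ) ≤ (N : ℝ) := Nat.cast_nonneg N
            linarith
          rw [one_mul] at h3
          exact h3.trans h2
        have hsum3 : ∑ i ∈ A.erase imax, (1/((N:ℝ)+1)) * conj Φ (4 * l₁ * g (k i) ω)
            ≤ ∑ i ∈ A.erase imax, conj Φ (|η (k i) ω| / M') := Finset.sum_le_sum hterm2
        refine hsum3.trans ?_
        have himg : ∑ i ∈ A.erase imax, conj Φ (|η (k i) ω| / M')
            = ∑ j' ∈ (A.erase imax).image k, conj Φ (|η j' ω| / M') :=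
          (Finset.sum_image (f := fun j' => conj Φ (|η j' ω| / M'))
            fun x _ y _ h => hk.injective h).symm
        rw [himg]
        apply Finset.sum_le_sum_of_subset_of_nonneg
        · intro j' hj'
          obtain ⟨i, hi, rfl⟩ := Finset.mem_image.mp hj'
          rw [Finset.mem_range]
          have h1 : k i ≤ k imax := hmax i (Finset.mem_of_mem_erase hi)
          have h2 : k i ≠ k imax := fun he => (Finset.ne_of_mem_erase hi) (hk.injective he)
          omega
        · intro j' _ _
          exact conj_nonneg hΦ _
      have hh1 : 0 ≤ C * ((imax : ℝ) + 1) ^ (-p) * conj Φ (|η (k imax) ω| / M') + D := by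
        have h4 := conj_nonneg hΦ (|η (k imax) ω| / M')
        have h3 : (0:ℝ) < ((imax : ℝ) + 1) ^ (-p) := Real.rpow_pos_of_pos (by positivity) _
        exact add_nonneg (mul_nonneg (mul_nonneg (by linarith) h3.le) h4) hD
      have hh2 : 0 ≤ ∑ j' ∈ Finset.range (k imax), conj Φ (|η j' ω| / M') :=
        Finset.sum_nonneg fun j' _ => conj_nonneg hΦ _
      have hbound1 : conj Φ (2 * l₁ * avgg N ω)
          ≤ (C * ((imax : ℝ) + 1) ^ (-p) * conj Φ (|η (k imax) ω| / M') + D)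
            + ∑ j' ∈ Finset.range (k imax), conj Φ (|η j' ω| / M') := by
        have hnn1 : 0 ≤ conj Φ (4 * l₁ * g (k imax) ω / ((N:ℝ)+1)) := conj_nonneg hΦ _
        have hnn2 : 0 ≤ conj Φ (4 * l₁ * (∑ i ∈ A.erase imax, g (k i) ω) / ((N:ℝ)+1)) :=
          conj_nonneg hΦ _
        linarith [hsplitconj, hT1, hT2, hh1, hh2]
      calc ENNReal.ofReal (conj Φ (2 * l₁ * avgg N ω))
          ≤ ENNReal.ofReal ((C * ((imax : ℝ) + 1) ^ (-p) * conj Φ (|η (k imax) ω| / M') + D)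
            + ∑ j' ∈ Finset.range (k imax), conj Φ (|η j' ω| / M')) :=
            ENNReal.ofReal_le_ofReal hbound1
      _ = ENNReal.ofReal (C * ((imax : ℝ) + 1) ^ (-p) * conj Φ (|η (k imax) ω| / M') + D)
            + ENNReal.ofReal (∑ j' ∈ Finset.range (k imax), conj Φ (|η j' ω| / M')) :=
            ENNReal.ofReal_add hh1 hh2
      _ ≤ ENNReal.ofReal (C * ((imax : ℝ) + 1) ^ (-p) * conj Φ (|η (k imax) ω| / M') + D)
            + Gfun n (k imax) ω := by
            apply add_le_add_right
            rw [ENNReal.ofReal_sum_of_nonneg fun j' _ => conj_nonneg hΦ _]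
            rw [hGη]
            apply Finset.sum_le_sum
            intro j' _
            rw [habs]
      _ = ψ imax ω := by
            symm
            rw [hψdef]
            exact Set.indicator_of_mem himaxB _
      _ ≤ ∑' i, ψ i ω := ENNReal.le_tsum imax
    · have hzero : avgg N ω = 0 := by
        simp only [havgdef]
        rw [Finset.sum_eq_zero, zero_div]
        intro i hi
        apply hgnot
        intro hmem
        exact hA ⟨i, Finset.mem_filter.2 ⟨hi, hmem⟩⟩
      rw [hzero, mul_zero, conj_zero hΦ, ENNReal.ofReal_zero]
      exact zero_le
  have hψint : ∀ i, ∫⁻ ω, ψ i ω ∂P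
      ≤ ENNReal.ofReal (C * ((i : ℝ) + 1) ^ (-p)) + ENNReal.ofReal D * ENNReal.ofReal (ε (k i))
        + ENNReal.ofReal (ε (k i)) := by
    intro i
    have hrp : (0:ℝ) ≤ C * ((i : ℝ) + 1) ^ (-p) :=
      mul_nonneg (by linarith) (Real.rpow_pos_of_pos (by positivity) _).le
    have hinner_meas : Measurable fun ω =>
        ENNReal.ofReal (C * ((i : ℝ) + 1) ^ (-p) * conj Φ (|η (k i) ω| / M') + D) := by
      apply Measurable.ennreal_ofReal
      exact (((conj_meas hΦ).comp ((hηm (k i)).abs.div_const M')).const_mul _).add_const _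
    have e0 : ∫⁻ ω, ψ i ω ∂P = ∫⁻ ω in B (k i),
        (ENNReal.ofReal (C * ((i : ℝ) + 1) ^ (-p) * conj Φ (|η (k i) ω| / M') + D)
          + Gfun n (k i) ω) ∂P := by
      simp only [hψdef]
      exact lintegral_indicator (hBmeas' (k i)) _
    rw [e0, lintegral_add_left hinner_meas]
    have h2 : ∫⁻ ω in B (k i),
        ENNReal.ofReal (C * ((i : ℝ) + 1) ^ (-p) * conj Φ (|η (k i) ω| / M') + D) ∂P
        ≤ ENNReal.ofReal (C * ((i : ℝ) + 1) ^ (-p))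
          + ENNReal.ofReal D * ENNReal.ofReal (ε (k i)) := by
      have hpt : ∀ ω, ENNReal.ofReal (C * ((i : ℝ) + 1) ^ (-p) * conj Φ (|η (k i) ω| / M') + D)
          = ENNReal.ofReal (C * ((i : ℝ) + 1) ^ (-p))
              * ENNReal.ofReal (conj Φ (η (k i) ω / M'))
            + ENNReal.ofReal D := by
        intro ω
        rw [ENNReal.ofReal_add (mul_nonneg hrp (conj_nonneg hΦ _)) hD,
          ENNReal.ofReal_mul hrp, habs]
      calc ∫⁻ ω in B (k i),
          ENNReal.ofReal (C * ((i : ℝ) + 1) ^ (-p) * conj Φ (|η (k i) ω| / M') + D) ∂P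
          = ∫⁻ ω in B (k i), (ENNReal.ofReal (C * ((i : ℝ) + 1) ^ (-p))
              * ENNReal.ofReal (conj Φ (η (k i) ω / M')) + ENNReal.ofReal D) ∂P :=
            lintegral_congr fun ω => hpt ω
      _ = ENNReal.ofReal (C * ((i : ℝ) + 1) ^ (-p))
            * (∫⁻ ω in B (k i), ENNReal.ofReal (conj Φ (η (k i) ω / M')) ∂P)
          + ENNReal.ofReal D * P (B (k i)) := by
          have hmm2 : Measurable fun ω => ENNReal.ofReal (C * ((i : ℝ) + 1) ^ (-p))
              * ENNReal.ofReal (conj Φ (η (k i) ω / M')) := by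
            apply Measurable.const_mul
            apply Measurable.ennreal_ofReal
            exact (conj_meas hΦ).comp ((hηm (k i)).div_const M')
          rw [lintegral_add_left hmm2,
            lintegral_const_mul' _ _ ENNReal.ofReal_ne_top, setLIntegral_const]
      _ ≤ ENNReal.ofReal (C * ((i : ℝ) + 1) ^ (-p)) * 1
          + ENNReal.ofReal D * ENNReal.ofReal (ε (k i)) := by
          apply add_le_add
          · exact mul_le_mul_right
              ((setLIntegral_le_lintegral _ _).trans (hηmod (k i))) _
          · exact mul_le_mul_right (hPB (k i)) _
      _ = ENNReal.ofReal (C * ((i : ℝ) + 1) ^ (-p))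
          + ENNReal.ofReal D * ENNReal.ofReal (ε (k i)) := by rw [mul_one]
    exact add_le_add h2 (hGB (k i))
  have hsummable : Summable (fun i : ℕ => C * ((i : ℝ) + 1) ^ (-p)) := by
    have h := Real.summable_nat_rpow_inv.2 hp
    have h2 := (summable_nat_add_iff 1).2 h
    apply Summable.mul_left
    exact h2.congr fun b => by
      push_cast
      rw [Real.rpow_neg (by positivity)]
  have htsum : (∑' i, ∫⁻ ω, ψ i ω ∂P) < ⊤ := by
    have h2 : ∀ i, ENNReal.ofReal (ε (k i)) ≤ ENNReal.ofReal ((1/2 : ℝ) ^ i) := by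
      intro i
      apply ENNReal.ofReal_le_ofReal
      rw [hεdef]
      exact pow_le_pow_of_le_one (by norm_num) (by norm_num) hk.le_apply
    have hgeo : (∑' i : ℕ, ENNReal.ofReal ((1/2 : ℝ) ^ i)) ≠ ⊤ := by
      rw [← ENNReal.ofReal_tsum_of_nonneg (fun i => by positivity)
        (summable_geometric_of_lt_one (by norm_num) (by norm_num))]
      exact ENNReal.ofReal_ne_top
    have hA : (∑' i : ℕ, ENNReal.ofReal (C * ((i : ℝ) + 1) ^ (-p))) ≠ ⊤ := by
      rw [← ENNReal.ofReal_tsum_of_nonneg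
        (fun i => mul_nonneg (by linarith) (Real.rpow_pos_of_pos (by positivity) _).le)
        hsummable]
      exact ENNReal.ofReal_ne_top
    have t3 : (∑' i : ℕ, ENNReal.ofReal (ε (k i))) < ⊤ :=
      (ne_top_of_le_ne_top hgeo (ENNReal.tsum_le_tsum h2)).lt_top
    have t2 : (∑' i : ℕ, ENNReal.ofReal D * ENNReal.ofReal (ε (k i))) < ⊤ := by
      rw [ENNReal.tsum_mul_left]
      exact ENNReal.mul_lt_top ENNReal.ofReal_lt_top t3
    calc (∑' i, ∫⁻ ω, ψ i ω ∂P)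
        ≤ ∑' i : ℕ, (ENNReal.ofReal (C * ((i : ℝ) + 1) ^ (-p))
          + ENNReal.ofReal D * ENNReal.ofReal (ε (k i)) + ENNReal.ofReal (ε (k i))) :=
          ENNReal.tsum_le_tsum hψint
    _ = (∑' i : ℕ, (ENNReal.ofReal (C * ((i : ℝ) + 1) ^ (-p))
          + ENNReal.ofReal D * ENNReal.ofReal (ε (k i))))
        + (∑' i : ℕ, ENNReal.ofReal (ε (k i))) := ENNReal.tsum_add
    _ = (∑' i : ℕ, ENNReal.ofReal (C * ((i : ℝ) + 1) ^ (-p)))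
        + (∑' i : ℕ, ENNReal.ofReal D * ENNReal.ofReal (ε (k i)))
        + (∑' i : ℕ, ENNReal.ofReal (ε (k i))) := by rw [ENNReal.tsum_add]
    _ < ⊤ := ENNReal.add_lt_top.2 ⟨ENNReal.add_lt_top.2 ⟨hA.lt_top, t2⟩, t3⟩
  have hkey : ∀ ω, (∀ᶠ j in atTop, ω ∉ B j) →
      Tendsto (fun N => cesaro (fun i => ξ (n (k i))) N ω) atTop (𝓝 (ξ₀ ω)) := by
    intro ω hω
    obtain ⟨J, hJ⟩ := eventually_atTop.mp hω
    have hu : Tendsto (fun i => ξ (n (k i)) ω) atTop (𝓝 (ξ₀ ω)) := by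
      rw [tendsto_iff_dist_tendsto_zero]
      have hb : ∀ᶠ i in atTop, dist (ξ (n (k i)) ω) (ξ₀ ω) ≤ (1/2 : ℝ) ^ i := by
        filter_upwards [eventually_ge_atTop J] with i hi
        have h1 : ω ∉ B (k i) := hJ (k i) (le_trans hi hk.le_apply)
        have h2 : ¬ ε (k i) ≤ |η (k i) ω| := h1
        push_neg at h2
        have h3 : ε (k i) ≤ (1/2 : ℝ) ^ i := by
          rw [hεdef]
          exact pow_le_pow_of_le_one (by norm_num) (by norm_num) hk.le_apply
        rw [Real.dist_eq]
        calc |ξ (n (k i)) ω - ξ₀ ω| = |η (k i) ω| := rfl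
        _ ≤ (1/2 : ℝ) ^ i := by linarith
      exact squeeze_zero' (Filter.Eventually.of_forall fun i => dist_nonneg) hb
        (tendsto_pow_atTop_nhds_zero_of_lt_one (by norm_num) (by norm_num))
    exact tendsto_cesaro_succ hu
  have hbdd2 : ∀ᵐ ω ∂P, BddAbove (Set.range fun N => |cesaro (fun i => ξ (n (k i))) N ω|) := by
    filter_upwards [hBC] with ω hω
    exact ((hkey ω hω).abs).bddAbove_range
  have hconv : ∀ᵐ ω ∂P,
      Tendsto (fun N => cesaro (fun i => ξ (n (k i))) N ω) atTop (𝓝 (ξ₀ ω)) := by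
    filter_upwards [hBC] with ω hω
    exact hkey ω hω
  have hcesm : ∀ N, Measurable fun ω => |cesaro (fun i => ξ (n (k i))) N ω| := by
    intro N
    have h1 : Measurable fun ω => (∑ i ∈ Finset.range (N + 1), ξ (n (k i)) ω) / ((N : ℝ) + 1) :=
      (Finset.measurable_sum _ fun i _ => hξm (n (k i))).div_const _
    exact h1.abs
  have hFmeas : Measurable fun ω => ⨆ N, |cesaro (fun i => ξ (n (k i))) N ω| :=
    Measurable.iSup hcesm
  set Θ : Ω → ℝ≥0∞ := fun ω => ENNReal.ofReal (conj Φ (4 * l₁ * |ξ₀ ω|))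
      + ENNReal.ofReal (conj Φ (8 * l₁)) + ∑' i, ψ i ω with hΘdef
  have hchain : ∀ᵐ ω ∂P,
      ENNReal.ofReal (conj Φ (l₁ * (⨆ N, |cesaro (fun i => ξ (n (k i))) N ω|))) ≤ Θ ω := by
    filter_upwards [hBC] with ω hω
    have hconvω := (hkey ω hω).abs
    have hattain := tendsto_sup_attain hconvω
    have hmain : ∀ N, conj Φ (l₁ * |cesaro (fun i => ξ (n (k i))) N ω|)
        ≤ conj Φ (4 * l₁ * |ξ₀ ω|) + conj Φ (8 * l₁) + conj Φ (2 * l₁ * avgg N ω) := by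
      intro N
      have h1 : conj Φ (l₁ * |cesaro (fun i => ξ (n (k i))) N ω|)
          ≤ conj Φ (l₁ * (|ξ₀ ω| + 2 + avgg N ω)) := by
        apply conj_mono hΦ (mul_nonneg hl₁pos.le (abs_nonneg _))
        exact mul_le_mul_of_nonneg_left (hcesbound N ω) hl₁pos.le
      have e1 : l₁ * (|ξ₀ ω| + 2 + avgg N ω)
          = 1/2 * (2 * l₁ * (|ξ₀ ω| + 2)) + 1/2 * (2 * l₁ * avgg N ω) := by ring
      have h2 := conj_comb_le hΦ (t := 1/2) (s := 1/2) (by norm_num) (by norm_num) (by norm_num)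
        (2 * l₁ * (|ξ₀ ω| + 2)) (2 * l₁ * avgg N ω)
      rw [← e1] at h2
      have e2 : 2 * l₁ * (|ξ₀ ω| + 2) = 1/2 * (4 * l₁ * |ξ₀ ω|) + 1/2 * (8 * l₁) := by ring
      have h3 := conj_comb_le hΦ (t := 1/2) (s := 1/2) (by norm_num) (by norm_num) (by norm_num)
        (4 * l₁ * |ξ₀ ω|) (8 * l₁)
      rw [← e2] at h3
      have hn1 := conj_nonneg hΦ (4 * l₁ * |ξ₀ ω|)
      have hn2 := conj_nonneg hΦ (8 * l₁)
      have hn3 := conj_nonneg hΦ (2 * l₁ * avgg N ω)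
      linarith [h1, h2, h3]
    rcases hattain with ⟨Nstar, hNstar⟩ | hlim
    · rw [hNstar]
      calc ENNReal.ofReal (conj Φ (l₁ * |cesaro (fun i => ξ (n (k i))) Nstar ω|))
          ≤ ENNReal.ofReal (conj Φ (4 * l₁ * |ξ₀ ω|) + conj Φ (8 * l₁)
            + conj Φ (2 * l₁ * avgg Nstar ω)) := ENNReal.ofReal_le_ofReal (hmain Nstar)
      _ ≤ ENNReal.ofReal (conj Φ (4 * l₁ * |ξ₀ ω|)) + ENNReal.ofReal (conj Φ (8 * l₁))
            + ENNReal.ofReal (conj Φ (2 * l₁ * avgg Nstar ω)) := by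
            rw [ENNReal.ofReal_add
              (add_nonneg (conj_nonneg hΦ _) (conj_nonneg hΦ _)) (conj_nonneg hΦ _),
              ENNReal.ofReal_add (conj_nonneg hΦ _) (conj_nonneg hΦ _)]
      _ ≤ Θ ω := add_le_add (le_refl _) (hF2 Nstar ω)
    · rw [hlim]
      have h5 : conj Φ (l₁ * |ξ₀ ω|) ≤ conj Φ (4 * l₁ * |ξ₀ ω|) := by
        apply conj_mono hΦ (mul_nonneg hl₁pos.le (abs_nonneg _))
        nlinarith [abs_nonneg (ξ₀ ω), hl₁pos]
      calc ENNReal.ofReal (conj Φ (l₁ * |ξ₀ ω|)) ≤ ENNReal.ofReal (conj Φ (4 * l₁ * |ξ₀ ω|)) :=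
            ENNReal.ofReal_le_ofReal h5
      _ ≤ Θ ω := le_add_right (le_add_right (le_refl _))
  have hΘint : ∫⁻ ω, Θ ω ∂P < ⊤ := by
    have hm1 : Measurable fun ω => ENNReal.ofReal (conj Φ (4 * l₁ * |ξ₀ ω|)) :=
      ((conj_meas hΦ).comp (hξ₀m.abs.const_mul _)).ennreal_ofReal
    have e3 : ∫⁻ ω, Θ ω ∂P = (∫⁻ ω, ENNReal.ofReal (conj Φ (4 * l₁ * |ξ₀ ω|)) ∂P)
        + ENNReal.ofReal (conj Φ (8 * l₁)) * P Set.univ + ∑' i, ∫⁻ ω, ψ i ω ∂P := by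
      simp only [hΘdef]
      rw [lintegral_add_left (hm1.fun_add measurable_const),
        lintegral_add_left hm1, lintegral_const,
        lintegral_tsum fun i => (hψmeas i).aemeasurable]
    rw [e3]
    have hb1 : (∫⁻ ω, ENNReal.ofReal (conj Φ (4 * l₁ * |ξ₀ ω|)) ∂P) ≤ 1 := by
      refine le_trans (lintegral_mono fun ω => ENNReal.ofReal_le_ofReal ?_) hM₀
      apply conj_mono_abs hΦ
      rw [abs_of_nonneg (mul_nonneg (by positivity) (abs_nonneg _)), abs_div]
      calc 4 * l₁ * |ξ₀ ω| ≤ 1 / M₀ * |ξ₀ ω| :=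
            mul_le_mul_of_nonneg_right h4l₁M₀ (abs_nonneg _)
      _ = |ξ₀ ω| / |M₀| := by rw [abs_of_pos hM₀pos]; ring
    have hb2 : ENNReal.ofReal (conj Φ (8 * l₁)) * P Set.univ < ⊤ := by
      rw [measure_univ, mul_one]
      exact ENNReal.ofReal_lt_top
    exact ENNReal.add_lt_top.2 ⟨ENNReal.add_lt_top.2
      ⟨lt_of_le_of_lt hb1 ENNReal.one_lt_top, hb2⟩, htsum⟩
  refine ⟨⟨hbdd2, hFmeas, l₁, hl₁pos, ?_⟩, hconv⟩
  calc ∫⁻ ω, ENNReal.ofReal (conj Φ (l₁ * ⨆ N, |cesaro (fun i => ξ (n (k i))) N ω|)) ∂P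
      ≤ ∫⁻ ω, Θ ω ∂P := lintegral_mono_ae hchain
  _ < ⊤ := hΘint


end OrliczPaper
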